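/- Let X be a finite set with |X| = n and a ∈ T_X an idempotent with rank(a) = r, where 1 < r < n. Let E = {f ∈ T_X : f·a·f = f} be the set of idempotents of the variant T_X^a, let P = Reg(T_X^a), and let D = {f ∈ P : rank(f) = r} be the top 𝒟^a-class of P. Then the subsemigroup of T_X^a generated by E (under ⋆) equals (E ∩ D) ∪ (P ∖ D); that is, it consists of the ⋆-idempotents of rank r together with all regular elements of rank strictly less than r. -/
import Mathlib


/-- Left-to-right composition of transformations: `x (f * g) = (x f) g`. -/
def tmul {X : Type*} (f g : X → X) : X → X := fun x => g (f x)

/-- The variant product: `f ⋆ g = f · a · g` (left-to-right). -/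
def vmul {X : Type*} (a f g : X → X) : X → X := fun x => g (a (f x))

/-- The rank of a transformation: the size of its image. -/
def rnk {X : Type*} [Fintype X] [DecidableEq X] (f : X → X) : ℕ :=
  (Finset.univ.image f).card

/-- The subsemigroup generated by `M` with respect to the binary operation `op`:
the least subset containing `M` and closed under `op`. -/
def genBy {T : Type*} (op : T → T → T) (M : Set T) : Set T :=
  ⋂₀ {N : Set T | M ⊆ N ∧ ∀ x ∈ N, ∀ y ∈ N, op x y ∈ N}

lemma subset_genBy {T : Type*} (op : T → T → T) (M : Set T) : M ⊆ genBy op M := by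
  intro x hx; exact Set.mem_sInter.mpr fun N hN => hN.1 hx

lemma genBy_mul {T : Type*} {op : T → T → T} {M : Set T} {x y : T}
    (hx : x ∈ genBy op M) (hy : y ∈ genBy op M) : op x y ∈ genBy op M :=
  Set.mem_sInter.mpr fun N hN => hN.2 x (hx N hN) y (hy N hN)

lemma genBy_min {T : Type*} {op : T → T → T} {M N : Set T}
    (h1 : M ⊆ N) (h2 : ∀ x ∈ N, ∀ y ∈ N, op x y ∈ N) : genBy op M ⊆ N :=
  Set.sInter_subset_of_mem ⟨h1, h2⟩

/-- Howie's theorem: every non-injective transformation of a finite set is a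
product of idempotent transformations. -/
lemma howie {B : Type*} [Fintype B] [DecidableEq B] (u : B → B) (hu : ¬ Function.Injective u) :
    u ∈ genBy tmul {e : B → B | tmul e e = e} := by
  suffices H : ∀ (m : ℕ) (u : B → B), ¬ Function.Injective u →
      (Finset.univ.filter fun z => u z ≠ z).card = m →
      u ∈ genBy tmul {e : B → B | tmul e e = e} from H _ u hu rfl
  intro m
  induction m using Nat.strong_induction_on with
  | _ m IH =>
  intro u hu hm
  have meas : ∀ (w : B → B) (x : B), w x ≠ x →
      (Finset.univ.filter fun z => Function.update w x x z ≠ z).card <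
      (Finset.univ.filter fun z => w z ≠ z).card := by
    intro w x hw
    apply Finset.card_lt_card
    have hsub : (Finset.univ.filter fun z => Function.update w x x z ≠ z) ⊆
        (Finset.univ.filter fun z => w z ≠ z) := by
      intro z hz
      simp only [Finset.mem_filter, Finset.mem_univ, true_and] at hz ⊢
      intro hwz
      rcases eq_or_ne z x with rfl | hzx
      · exact hz (Function.update_self _ _ _)
      · exact hz ((Function.update_of_ne hzx _ _).trans hwz)
    refine (Finset.ssubset_iff_of_subset hsub).mpr ⟨x, ?_, ?_⟩
    · simp [hw]
    · simp [Function.update_self]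
  obtain ⟨p, q, hpq, hpqne⟩ := Function.not_injective_iff.mp hu
  obtain ⟨x, y, hxy, huxy, hux⟩ : ∃ x y, x ≠ y ∧ u x = u y ∧ u x ≠ x := by
    rcases eq_or_ne (u p) p with h | h
    · exact ⟨q, p, hpqne.symm, hpq.symm, by rw [← hpq, h]; exact hpqne⟩
    · exact ⟨p, q, hpqne, hpq, h⟩
  set ε : B → B := fun z => if z = x then y else z with hεdef
  have hεy : ε y = y := by simp [hεdef, hxy.symm]
  have hεx : ε x = y := by simp [hεdef]
  have hε : ε ∈ {e : B → B | tmul e e = e} := by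
    show tmul ε ε = ε
    funext z
    show ε (ε z) = ε z
    rcases eq_or_ne z x with rfl | hzx
    · rw [hεx, hεy]
    · simp [hεdef, hzx]
  have hεg : ε ∈ genBy tmul {e : B → B | tmul e e = e} := subset_genBy _ _ hε
  set v := Function.update u x x with hvdef
  have hvx : v x = x := Function.update_self _ _ _
  have hvne : ∀ z, z ≠ x → v z = u z := fun z hz => Function.update_of_ne hz _ _
  have huv : u = tmul ε v := by
    funext z
    show u z = v (ε z)
    rcases eq_or_ne z x with rfl | hzx
    · rw [hεx, hvne y hxy.symm, huxy]
    · simp [hεdef, hzx, hvne z hzx]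
  by_cases hv : Function.Injective v
  · -- hard case: erasing the collapse at `x` yields a bijection
    by_cases hall : ∀ c, c ≠ x → c ≠ y → u c = c
    · -- then `u` is itself the idempotent ε
      have hvy : v y = y := by
        by_contra hvy
        have htx : v y ≠ x := fun h => hxy.symm (hv (h.trans hvx.symm))
        have : v (v y) = v y := by
          rw [hvne _ htx, hall _ htx hvy]
        exact hvy (hv this)
      have huy : u y = y := by rw [← hvne y hxy.symm, hvy]
      have : u = ε := by
        funext z
        rcases eq_or_ne z x with rfl | hzx
        · rw [hεx, huxy, huy]
        · rcases eq_or_ne z y with rfl | hzy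
          · simp [hεdef, hzx, huy]
          · simp [hεdef, hzx, hall z hzx hzy]
      rw [this]; exact hεg
    · push_neg at hall
      obtain ⟨c, hcx, hcy, hc⟩ := hall
      set d := u c with hddef
      have hdc : d ≠ c := hc
      have hdx : d ≠ x := by
        intro h
        apply hcx
        apply hv
        rw [hvne c hcx, ← hddef, h, hvx]
      have hune : ∀ z, u z ≠ x := by
        intro z hz
        rcases eq_or_ne z x with rfl | hzx
        · exact hux hz
        · exact hzx (hv ((hvne z hzx).trans (hz.trans hvx.symm)))
      set ε2 : B → B := fun z => if z = x then d else z with hε2def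
      have hε2 : ε2 ∈ {e : B → B | tmul e e = e} := by
        show tmul ε2 ε2 = ε2
        funext z
        show ε2 (ε2 z) = ε2 z
        rcases eq_or_ne z x with rfl | hzx
        · simp [hε2def, hdx]
        · simp [hε2def, hzx]
      set w := Function.update u c x with hwdef
      have hwc : w c = x := Function.update_self _ _ _
      have hwne : ∀ z, z ≠ c → w z = u z := fun z hz => Function.update_of_ne hz _ _
      have hw_eq : u = tmul w ε2 := by
        funext z
        show u z = ε2 (w z)
        rcases eq_or_ne z c with rfl | hzc
        · simp [hwc, hε2def, hddef]
        · rw [hwne z hzc]; simp [hε2def, hune z]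
      set v' := Function.update w x x with hv'def
      have hv'x : v' x = x := Function.update_self _ _ _
      have hv'ne : ∀ z, z ≠ x → v' z = w z := fun z hz => Function.update_of_ne hz _ _
      have hv'c : v' c = x := by rw [hv'ne c hcx, hwc]
      have hv'inj : ¬ Function.Injective v' := by
        intro h
        exact hcx (h (hv'c.trans hv'x.symm))
      have hwx : w x = u x := hwne x (Ne.symm hcx)
      have hw_decomp : w = tmul ε v' := by
        funext z
        show w z = v' (ε z)
        rcases eq_or_ne z x with rfl | hzx
        · rw [hεx, hv'ne y hxy.symm, hwne y (fun h => hcy h.symm), ← huxy, hwx]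
        · simp only [hεdef, if_neg hzx]
          exact (hv'ne z hzx).symm
      have hfw : (Finset.univ.filter fun z => w z ≠ z) =
          (Finset.univ.filter fun z => u z ≠ z) := by
        ext z
        simp only [Finset.mem_filter, Finset.mem_univ, true_and]
        rcases eq_or_ne z c with rfl | hzc
        · constructor
          · intro _; exact hc
          · intro _; rw [hwc]; exact Ne.symm hcx
        · rw [hwne z hzc]
      have hwxne : w x ≠ x := by rw [hwx]; exact hux
      have hlt := meas w x hwxne
      rw [hfw, hm] at hlt
      have hIH := IH _ hlt v' hv'inj rfl
      rw [hw_eq, hw_decomp]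
      exact genBy_mul (genBy_mul hεg hIH) (subset_genBy _ _ hε2)
  · -- easy case
    have hlt := meas u x hux
    rw [hm] at hlt
    have hIH := IH _ hlt v hv rfl
    rw [huv]
    exact genBy_mul hεg hIH

section
variable {X : Type*} [Fintype X] [DecidableEq X]

lemma image_tmul (s : Finset X) (f g : X → X) : s.image (tmul f g) = (s.image f).image g := by
  rw [Finset.image_image]; rfl

lemma rnk_tmul_le_left (f g : X → X) : rnk (tmul f g) ≤ rnk f := by
  unfold rnk; rw [image_tmul]; exact Finset.card_image_le

lemma rnk_tmul_le_right (f g : X → X) : rnk (tmul f g) ≤ rnk g := by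
  unfold rnk; rw [image_tmul]
  exact Finset.card_le_card (Finset.image_subset_image (Finset.subset_univ _))

lemma P_c1 (a f : X → X) (hf : rnk (tmul (tmul a f) a) = rnk f) :
    (Finset.univ.image a).image f = Finset.univ.image f := by
  have hsub : (Finset.univ.image a).image f ⊆ Finset.univ.image f := by
    intro b hb
    rcases Finset.mem_image.mp hb with ⟨z, _, rfl⟩
    exact Finset.mem_image_of_mem f (Finset.mem_univ z)
  apply Finset.eq_of_subset_of_card_le hsub
  calc (Finset.univ.image f).card = rnk f := rfl
    _ = rnk (tmul (tmul a f) a) := hf.symm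
    _ = (((Finset.univ.image a).image f).image a).card := by
        unfold rnk; rw [image_tmul, image_tmul]
    _ ≤ ((Finset.univ.image a).image f).card := Finset.card_image_le

lemma P_c2 (a f : X → X) (hf : rnk (tmul (tmul a f) a) = rnk f) :
    ∀ b c, b ∈ Finset.univ.image f → c ∈ Finset.univ.image f → a b = a c → b = c := by
  have hc1 := P_c1 a f hf
  have hcard : ((Finset.univ.image f).image a).card = (Finset.univ.image f).card := by
    apply le_antisymm Finset.card_image_le
    apply le_of_eq
    calc (Finset.univ.image f).card = rnk f := rfl
      _ = rnk (tmul (tmul a f) a) := hf.symm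
      _ = (((Finset.univ.image a).image f).image a).card := by
          unfold rnk; rw [image_tmul, image_tmul]
      _ = ((Finset.univ.image f).image a).card := by rw [hc1]
  have hinj := Finset.card_image_iff.mp hcard
  intro b c hb hc hbc
  exact hinj (Finset.mem_coe.mpr hb) (Finset.mem_coe.mpr hc) hbc

lemma P_of (a f : X → X) (hc1 : (Finset.univ.image a).image f = Finset.univ.image f)
    (hc2 : ∀ b c, b ∈ Finset.univ.image f → c ∈ Finset.univ.image f → a b = a c → b = c) :
    rnk (tmul (tmul a f) a) = rnk f := by
  unfold rnk
  rw [image_tmul, image_tmul, hc1]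
  exact Finset.card_image_of_injOn (fun b hb c hc h => hc2 b c hb hc h)

lemma E_subset_P (a f : X → X) (hf : vmul a f f = f) :
    rnk (tmul (tmul a f) a) = rnk f := by
  have hfp : ∀ z, f (a (f z)) = f z := fun z => congrFun hf z
  apply le_antisymm
  · exact le_trans (rnk_tmul_le_left _ _) (rnk_tmul_le_right a f)
  · have hid : f = tmul (tmul f (tmul (tmul a f) a)) f := by
      funext x
      show f x = f (a (f (a (f x))))
      rw [hfp (a (f x)), hfp x]
    calc rnk f = rnk (tmul (tmul f (tmul (tmul a f) a)) f) := by rw [← hid]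
      _ ≤ rnk (tmul f (tmul (tmul a f) a)) := rnk_tmul_le_left _ _
      _ ≤ rnk (tmul (tmul a f) a) := rnk_tmul_le_right _ _

lemma ED_afa (a f : X → X) (haa : ∀ x, a (a x) = a x) (hf : vmul a f f = f)
    (hfP : rnk (tmul (tmul a f) a) = rnk f) (hrf : rnk f = rnk a) :
    tmul (tmul a f) a = a := by
  have hfp : ∀ z, f (a (f z)) = f z := fun z => congrFun hf z
  set g := tmul (tmul a f) a with hg
  have hgx : ∀ x, g x = a (f (a x)) := fun _ => rfl
  have hgg : ∀ x, g (g x) = g x := by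
    intro x
    calc g (g x) = a (f (a (a (f (a x))))) := rfl
      _ = a (f (a (f (a x)))) := by rw [haa (f (a x))]
      _ = a (f (a x)) := by rw [hfp (a x)]
      _ = g x := rfl
  have hsub : Finset.univ.image g ⊆ Finset.univ.image a := by
    intro b hb
    rcases Finset.mem_image.mp hb with ⟨z, _, rfl⟩
    exact Finset.mem_image.mpr ⟨f (a z), Finset.mem_univ _, rfl⟩
  have hcard : (Finset.univ.image a).card ≤ (Finset.univ.image g).card := by
    show rnk a ≤ rnk g
    rw [show rnk g = rnk f from hfP, hrf]
  have heq : Finset.univ.image g = Finset.univ.image a :=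
    Finset.eq_of_subset_of_card_le hsub hcard
  funext x
  have hax : a x ∈ Finset.univ.image g := by
    rw [heq]; exact Finset.mem_image_of_mem a (Finset.mem_univ x)
  rcases Finset.mem_image.mp hax with ⟨w, _, hw⟩
  show g x = a x
  calc g x = g (a x) := by rw [hgx, hgx (a x), haa]
    _ = g (g w) := by rw [hw]
    _ = g w := hgg w
    _ = a x := hw

lemma ED_of (a f : X → X) (hafa : tmul (tmul a f) a = a) (hrf : rnk f = rnk a) :
    vmul a f f = f := by
  have hfP : rnk (tmul (tmul a f) a) = rnk f := by rw [hafa, hrf]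
  have hc1 := P_c1 a f hfP
  have hafap : ∀ z, a (f (a z)) = a z := fun z => congrFun hafa z
  funext x
  show f (a (f x)) = f x
  have hfx : f x ∈ (Finset.univ.image a).image f := by
    rw [hc1]; exact Finset.mem_image_of_mem f (Finset.mem_univ x)
  rcases Finset.mem_image.mp hfx with ⟨z, hz, hzx⟩
  rcases Finset.mem_image.mp hz with ⟨w, _, rfl⟩
  rw [← hzx, hafap w]

lemma P_closed (a f g : X → X) (hfP : rnk (tmul (tmul a f) a) = rnk f)
    (hgP : rnk (tmul (tmul a g) a) = rnk g) :
    rnk (tmul (tmul a (vmul a f g)) a) = rnk (vmul a f g) := by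
  have hh : vmul a f g = tmul (tmul f a) g := rfl
  apply P_of
  · rw [hh]
    simp only [image_tmul]
    rw [P_c1 a f hfP]
  · intro b c hb hc hbc
    apply P_c2 a g hgP b c _ _ hbc
    · rcases Finset.mem_image.mp hb with ⟨z, _, rfl⟩
      exact Finset.mem_image.mpr ⟨a (f z), Finset.mem_univ _, rfl⟩
    · rcases Finset.mem_image.mp hc with ⟨z, _, rfl⟩
      exact Finset.mem_image.mpr ⟨a (f z), Finset.mem_univ _, rfl⟩

lemma lift_gen (a : X → X) (haa : ∀ x, a (a x) = a x) (g : X → X)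
    (hga : ∀ x, g (a x) = g x) (hag : ∀ x, a (g x) = g x) (hrnk : rnk g < rnk a) :
    g ∈ genBy (vmul a) {f : X → X | vmul a f f = f} := by
  classical
  let B := {x : X // a x = x}
  let u' : B → B := fun z => ⟨g z.val, hag z.val⟩
  let Φ : (B → B) → (X → X) := fun v x => (v ⟨a x, haa x⟩).val
  have hom : ∀ v w : B → B, vmul a (Φ v) (Φ w) = Φ (tmul v w) := by
    intro v w
    funext x
    have key : (⟨a (a (Φ v x)), haa _⟩ : B) = v ⟨a x, haa x⟩ := by
      apply Subtype.ext
      show a (a ((v ⟨a x, haa x⟩).val)) = (v ⟨a x, haa x⟩).val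
      rw [haa, (v ⟨a x, haa x⟩).prop]
    show (w ⟨a (a (Φ v x)), haa _⟩).val = (w (v ⟨a x, haa x⟩)).val
    rw [key]
  have hsub : ∀ v ∈ genBy tmul {e : B → B | tmul e e = e},
      Φ v ∈ genBy (vmul a) {f : X → X | vmul a f f = f} := by
    intro v hv
    refine genBy_min (N := {v : B → B | Φ v ∈ genBy (vmul a) {f : X → X | vmul a f f = f}})
      ?_ ?_ hv
    · intro e he
      have : vmul a (Φ e) (Φ e) = Φ e := by rw [hom, he]
      exact subset_genBy _ _ this
    · intro v1 hv1 v2 hv2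
      have : vmul a (Φ v1) (Φ v2) ∈ genBy (vmul a) {f : X → X | vmul a f f = f} :=
        genBy_mul hv1 hv2
      rw [hom] at this
      exact this
  have hninj : ¬ Function.Injective u' := by
    intro hinj
    have hval : Function.Injective (fun z : B => (u' z).val) :=
      Subtype.val_injective.comp hinj
    have himg : Finset.univ.image g = Finset.univ.image (fun z : B => (u' z).val) := by
      apply Finset.Subset.antisymm
      · intro b hb
        rcases Finset.mem_image.mp hb with ⟨x, _, rfl⟩
        exact Finset.mem_image.mpr ⟨⟨a x, haa x⟩, Finset.mem_univ _, hga x⟩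
      · intro b hb
        rcases Finset.mem_image.mp hb with ⟨z, _, rfl⟩
        exact Finset.mem_image.mpr ⟨z.val, Finset.mem_univ _, rfl⟩
    have h1 : rnk g = Fintype.card B := by
      unfold rnk
      rw [himg, Finset.card_image_of_injective _ hval, Finset.card_univ]
    have h2 : Fintype.card B = rnk a := by
      unfold rnk
      rw [Fintype.card_subtype]
      congr 1
      ext b
      simp only [Finset.mem_filter, Finset.mem_univ, true_and, Finset.mem_image]
      constructor
      · intro hb; exact ⟨b, hb⟩
      · rintro ⟨w, rfl⟩; exact haa w
    omega
  have hΦu : Φ u' = g := by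
    funext x
    show g (a x) = g x
    exact hga x
  rw [← hΦu]
  exact hsub u' (howie u' hninj)

end

theorem stmt_17 {X : Type*} [Fintype X] [DecidableEq X]
    (n : ℕ) (hn : n = Fintype.card X)
    (a : X → X) (ha : tmul a a = a) (r : ℕ) (hr : rnk a = r)
    (h1r : 1 < r) (hrn : r < n)
    (E P D : Set (X → X))
    -- E is the set of idempotents of the variant T_X^a
    (hE : E = {f : X → X | vmul a f f = f})
    (hP : P = {f : X → X | rnk (tmul (tmul a f) a) = rnk f})
    (hD : D = {f : X → X | f ∈ P ∧ rnk f = r}) :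
    -- ⟨E⟩ = (E ∩ D) ∪ (P ∖ D)
    genBy (vmul a) E = (E ∩ D) ∪ (P \ D) := by
  classical
  subst hE hP hD hr hn
  have haa : ∀ x, a (a x) = a x := fun x => congrFun ha x
  apply Set.Subset.antisymm
  · -- ⟨E⟩ ⊆ (E ∩ D) ∪ (P \ D)
    apply genBy_min
    · intro f hf
      have hfE : vmul a f f = f := hf
      have hfP := E_subset_P a f hfE
      by_cases hfr : rnk f = rnk a
      · exact Or.inl ⟨hfE, hfP, hfr⟩
      · exact Or.inr ⟨hfP, fun hDm => hfr hDm.2⟩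
    · intro f hf g hg
      have hfP : rnk (tmul (tmul a f) a) = rnk f := by
        rcases hf with ⟨_, h, _⟩ | ⟨h, _⟩ <;> exact h
      have hgP : rnk (tmul (tmul a g) a) = rnk g := by
        rcases hg with ⟨_, h, _⟩ | ⟨h, _⟩ <;> exact h
      have hhP := P_closed a f g hfP hgP
      by_cases hhr : rnk (vmul a f g) = rnk a
      · have h1 : rnk (vmul a f g) ≤ rnk f := rnk_tmul_le_left f (tmul a g)
        have h2 : rnk (vmul a f g) ≤ rnk g := rnk_tmul_le_right (tmul f a) g
        have hfle : rnk f ≤ rnk a := by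
          have := rnk_tmul_le_right (tmul a f) a
          rwa [hfP] at this
        have hgle : rnk g ≤ rnk a := by
          have := rnk_tmul_le_right (tmul a g) a
          rwa [hgP] at this
        have hfr : rnk f = rnk a := le_antisymm hfle (hhr ▸ h1)
        have hgr : rnk g = rnk a := le_antisymm hgle (hhr ▸ h2)
        have hfE : vmul a f f = f := by
          rcases hf with ⟨h, _⟩ | ⟨_, hnD⟩
          · exact h
          · exact absurd ⟨hfP, hfr⟩ hnD
        have hgE : vmul a g g = g := by
          rcases hg with ⟨h, _⟩ | ⟨_, hnD⟩
          · exact h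
          · exact absurd ⟨hgP, hgr⟩ hnD
        have hfa := ED_afa a f haa hfE hfP hfr
        have hga := ED_afa a g haa hgE hgP hgr
        have hha : tmul (tmul a (vmul a f g)) a = a := by
          funext x
          show a (g (a (f (a x)))) = a x
          have hstep : a (g (a (f (a x)))) = a (f (a x)) := congrFun hga (f (a x))
          rw [hstep]
          exact congrFun hfa x
        exact Or.inl ⟨ED_of a (vmul a f g) hha hhr, hhP, hhr⟩
      · exact Or.inr ⟨hhP, fun hDm => hhr hDm.2⟩
  · -- (E ∩ D) ∪ (P \ D) ⊆ ⟨E⟩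
    rintro f (⟨hfE, _⟩ | ⟨hfPm, hfD⟩)
    · exact subset_genBy _ _ hfE
    · have hfPr : rnk (tmul (tmul a f) a) = rnk f := hfPm
      have hfle : rnk f ≤ rnk a := by
        have := rnk_tmul_le_right (tmul a f) a
        rwa [hfPr] at this
      have hfr : rnk f < rnk a := lt_of_le_of_ne hfle (fun h => hfD ⟨hfPm, h⟩)
      have hc1 := P_c1 a f hfPr
      have hc2 := P_c2 a f hfPr
      have hfmem : ∀ x, f x ∈ Finset.univ.image f :=
        fun x => Finset.mem_image_of_mem f (Finset.mem_univ x)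
      obtain ⟨σ, hσ⟩ : ∃ σ : X → X, ∀ b ∈ Finset.univ.image f, a (σ b) = σ b ∧ f (σ b) = b := by
        refine ⟨fun b => if hb : ∃ w, f (a w) = b then a hb.choose else b, ?_⟩
        intro b hb
        have hex : ∃ w, f (a w) = b := by
          rw [← hc1] at hb
          rcases Finset.mem_image.mp hb with ⟨z, hz, hzb⟩
          rcases Finset.mem_image.mp hz with ⟨w, _, rfl⟩
          exact ⟨w, hzb⟩
        simp only [dif_pos hex]
        exact ⟨haa _, hex.choose_spec⟩
      obtain ⟨τ, hτ1, hτ2⟩ : ∃ τ : X → X, (∀ x, a (τ (a x)) = a x) ∧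
          (∀ b ∈ Finset.univ.image f, τ (a b) = b) := by
        refine ⟨fun z => if hz : ∃ b, (∃ w, f w = b) ∧ a b = z then hz.choose else z, ?_, ?_⟩
        · intro x
          by_cases hz : ∃ b, (∃ w, f w = b) ∧ a b = a x
          · simp only [dif_pos hz]; exact hz.choose_spec.2
          · simp only [dif_neg hz]; exact haa x
        · intro b hb
          rcases Finset.mem_image.mp hb with ⟨w, _, hw⟩
          have hz : ∃ c, (∃ w, f w = c) ∧ a c = a b := ⟨b, ⟨w, hw⟩, rfl⟩
          simp only [dif_pos hz]
          obtain ⟨⟨w', hw'⟩, hab⟩ := hz.choose_spec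
          apply hc2 _ b _ hb hab
          exact Finset.mem_image.mpr ⟨w', Finset.mem_univ _, hw'⟩
      set h : X → X := fun x => σ (f x) with hhdef
      set q : X → X := fun x => τ (a x) with hqdef
      set g : X → X := fun x => a (f (a x)) with hgdef
      have hhE : vmul a h h = h := by
        funext x
        show σ (f (a (σ (f x)))) = σ (f x)
        rw [(hσ _ (hfmem x)).1, (hσ _ (hfmem x)).2]
      have hqE : vmul a q q = q := by
        funext x
        show τ (a (a (τ (a x)))) = τ (a x)
        rw [haa, hτ1 x]
      have hgmem : g ∈ genBy (vmul a) {f : X → X | vmul a f f = f} := by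
        apply lift_gen a haa g
        · intro x; show a (f (a (a x))) = a (f (a x)); rw [haa]
        · intro x; exact haa _
        · show rnk g < rnk a
          have hgf : rnk g = rnk f := hfPr
          rw [hgf]; exact hfr
      have hfinal : f = vmul a h (vmul a g q) := by
        funext x
        show f x = q (a (g (a (h x))))
        have h1 : a (h x) = h x := (hσ _ (hfmem x)).1
        have h2 : f (h x) = f x := (hσ _ (hfmem x)).2
        have e1 : g (a (h x)) = a (f x) := by
          show a (f (a (a (h x)))) = a (f x)
          rw [haa, h1, h2]
        rw [e1]
        show f x = τ (a (a (a (f x))))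
        rw [haa, haa]
        exact (hτ2 _ (hfmem x)).symm
      rw [hfinal]
      exact genBy_mul (subset_genBy _ _ hhE) (genBy_mul hgmem (subset_genBy _ _ hqE))
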